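/- Let a > 0 and set p₁ = (a,a,0), p₂ = (a,-a,0), p₃ = (-a,-a,0), p₄ = (-a,a,0), with unit axes p̂ⱼ = pⱼ/‖pⱼ‖ and Pⱼ = p̂ⱼ^×. For angles η₁ = η₃ = η and η₂ = η₄ = -η, let Rⱼ = I + (sin ηⱼ)Pⱼ + (1 - cos ηⱼ)Pⱼ². Then the total thrust torque ∑ⱼ pⱼ × (Rⱼ·e₃) equals 0. -/
import Mathlib


open Matrix

/-- Cross-product (skew-symmetric) matrix of a vector `p`. -/
def skew (p : Fin 3 → ℝ) : Matrix (Fin 3) (Fin 3) ℝ :=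
  !![0, -p 2, p 1; p 2, 0, -p 0; -p 1, p 0, 0]

/-- Rodrigues rotation about axis `phat` by angle `η`. -/
noncomputable def rodrigues (phat : Fin 3 → ℝ) (η : ℝ) : Matrix (Fin 3) (Fin 3) ℝ :=
  (1 : Matrix (Fin 3) (Fin 3) ℝ) + Real.sin η • skew phat + (1 - Real.cos η) • (skew phat) ^ 2

/-- In the T-module configuration (square arms, tilt angles
η₁ = η₃ = η, η₂ = η₄ = -η about the arm axes), the total thrust torque
`∑ⱼ pⱼ × (Rⱼ·e₃)` is zero. -/
theorem tmodule_thrust_torque_balanced (a : ℝ) (ha : 0 < a) (η : ℝ)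
    (p₁ p₂ p₃ p₄ phat₁ phat₂ phat₃ phat₄ : Fin 3 → ℝ)
    (hp₁ : p₁ = ![a, a, 0]) (hp₂ : p₂ = ![a, -a, 0])
    (hp₃ : p₃ = ![-a, -a, 0]) (hp₄ : p₄ = ![-a, a, 0])
    (hph₁ : phat₁ = (Real.sqrt 2 * a)⁻¹ • p₁) (hph₂ : phat₂ = (Real.sqrt 2 * a)⁻¹ • p₂)
    (hph₃ : phat₃ = (Real.sqrt 2 * a)⁻¹ • p₃) (hph₄ : phat₄ = (Real.sqrt 2 * a)⁻¹ • p₄) :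
    crossProduct p₁ ((rodrigues phat₁ η).mulVec ![0, 0, 1]) +
      crossProduct p₂ ((rodrigues phat₂ (-η)).mulVec ![0, 0, 1]) +
      crossProduct p₃ ((rodrigues phat₃ η).mulVec ![0, 0, 1]) +
      crossProduct p₄ ((rodrigues phat₄ (-η)).mulVec ![0, 0, 1]) = 0 := by
  subst hp₁ hp₂ hp₃ hp₄ hph₁ hph₂ hph₃ hph₄
  funext i
  fin_cases i <;>
    simp [rodrigues, skew, crossProduct, mulVec, dotProduct, Fin.sum_univ_succ,
      Matrix.add_apply, Matrix.smul_apply, Matrix.one_apply, pow_two, Matrix.mul_apply,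
      Pi.smul_apply] <;>
    ring
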